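/- arXiv:1008.0828 — 2 statements merged into one kernel-verified Lean document; each statement's English description precedes it below -/
import Mathlib

section
/- Let γ ≤ α be compositions of n (γ refines α). Then Σ_{β : γ ≤ β ≤ α} (-1)^{ℓ(α)-ℓ(β)} q^{ℓ(α)-ℓ(β) + doff_β(DP(γ)) - doff_{rev(α)}(DP(rev(β)))} equals 1 if γ = α and 0 if γ < α, as an identity of Laurent polynomials in q. -/
/-! Write `T c` for the touch set of `c`. Counting, for each `s ∈ T γ`, the parts of `β` after
the one containing `s` shows `doff_β(DP(γ)) = #{(s, t) ∈ T γ × T β | s < t}`; reflecting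
`s ↦ n - s` shows that `doff_{rev α}(DP(rev β))` is the same count for `(α, β)` shifted by
`ℓ(α) - ℓ(β)`. So with `D = T γ \ T α` and `T β = T α ⊔ S`, the summand is
`q^c ∏_{t ∈ S} (-q^{r t})`, `r t = #{s ∈ D | s < t}`, and the sum over `S ⊆ D` factors as
`q^c ∏_{t ∈ D} (1 - q^{r t})`, whose factor at `min D` vanishes. -/

open Finset MvPolynomial

noncomputable section

/-- Base field `F = ℚ(q)`. -/
abbrev F : Type := RatFunc ℚ

/-- The parameter `q`. -/
noncomputable def q : F := RatFunc.X

/-- The ring of symmetric functions `Λ = F[p₁, p₂, p₃, …]`, where the variable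
`X k` represents the power sum `p_{k+1}`. -/
abbrev SymF : Type := MvPolynomial ℕ F

/-- `pp k` is the power sum `p_k` for `k ≥ 1`. -/
noncomputable def pp (k : ℕ) : SymF := MvPolynomial.X (k - 1)

/-- Complete homogeneous symmetric functions, via Newton's identity
`(n+1) h_{n+1} = ∑_{k=1}^{n+1} p_k h_{n+1-k}`. -/
noncomputable def hN : ℕ → SymF
  | 0 => 1
  | n + 1 => ((n : F) + 1)⁻¹ • ∑ k ∈ Finset.range (n + 1), pp (k + 1) * hN (n - k)
  termination_by n => n
  decreasing_by omega

/-- Elementary symmetric functions, via Newton's identity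
`(n+1) e_{n+1} = ∑_{k=1}^{n+1} (-1)^{k-1} p_k e_{n+1-k}`. -/
noncomputable def eN : ℕ → SymF
  | 0 => 1
  | n + 1 => ((n : F) + 1)⁻¹ • ∑ k ∈ Finset.range (n + 1), ((-1 : F) ^ k) • (pp (k + 1) * eN (n - k))
  termination_by n => n
  decreasing_by omega

/-- `hh m = h_m` for `m ≥ 0` and `0` for `m < 0`. -/
noncomputable def hh (m : ℤ) : SymF := if 0 ≤ m then hN m.toNat else 0

/-- `ee m = e_m` for `m ≥ 0` and `0` for `m < 0`. -/
noncomputable def ee (m : ℤ) : SymF := if 0 ≤ m then eN m.toNat else 0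

/-- The plethystic translation `f[X] ↦ f[X + (1-q)z]`, determined by
`p_k ↦ p_k + (1-q^k) z^k`.  The coefficient of `z^r` computes `h_r[X(1-q)]^⊥ f`. -/
noncomputable def Tq : SymF →ₐ[F] Polynomial SymF :=
  MvPolynomial.aeval fun k =>
    Polynomial.C (MvPolynomial.X k) +
      Polynomial.C (MvPolynomial.C (1 - q ^ (k + 1))) * Polynomial.X ^ (k + 1)

/-- The operator `h_r[X(1-q)]^⊥`. -/
noncomputable def Dq (r : ℕ) (P : SymF) : SymF := (Tq P).coeff r

/-- The plethystic translation `f[X] ↦ f[X - z]`, determined by `p_k ↦ p_k - z^k`;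
one has `f[X - z] = ∑_k (-z)^k (e_k^⊥ f)[X]`. -/
noncomputable def T1 : SymF →ₐ[F] Polynomial SymF :=
  MvPolynomial.aeval fun k =>
    Polynomial.C (MvPolynomial.X k) - Polynomial.X ^ (k + 1)

/-- The operator `e_r^⊥`. -/
noncomputable def eperp (r : ℕ) (P : SymF) : SymF := ((-1 : F) ^ r) • (T1 P).coeff r

/-- The Hall–Littlewood creation operator
`ℂ_m P = (-1/q)^{m-1} ∑_{r ≥ 0} q^{-r} h_{m+r} · (h_r[X(1-q)])^⊥ P`
(the sum is finite: terms with `r > deg_z (Tq P)` vanish). -/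
noncomputable def Cop (m : ℤ) (P : SymF) : SymF :=
  ((-q⁻¹ : F) ^ (m - 1)) •
    ∑ r ∈ Finset.range ((Tq P).natDegree + 1), ((q⁻¹ : F) ^ r) • (hh (m + r) * Dq r P)

/-- The creation operator `𝔹_m P = ∑_{r ≥ 0} (-1)^r e_{m+r} · (h_r[X(1-q)])^⊥ P`. -/
noncomputable def Bop (m : ℤ) (P : SymF) : SymF :=
  ∑ r ∈ Finset.range ((Tq P).natDegree + 1), ((-1 : F) ^ r) • (ee (m + r) * Dq r P)

/-- The Bernstein (Schur) creation operator `S_m P = ∑_{r ≥ 0} (-1)^r h_{m+r} · e_r^⊥ P`. -/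
noncomputable def Sop (m : ℤ) (P : SymF) : SymF :=
  ∑ r ∈ Finset.range ((T1 P).natDegree + 1), ((-1 : F) ^ r) • (hh (m + r) * eperp r P)

/-- `C_α[X;q] = ℂ_{α₁} ℂ_{α₂} ⋯ ℂ_{α_ℓ}(1)`. -/
noncomputable def Cfun : List ℕ → SymF
  | [] => 1
  | a :: l => Cop a (Cfun l)

/-- `B_α[X;q] = 𝔹_{α_ℓ} 𝔹_{α_{ℓ-1}} ⋯ 𝔹_{α₁}(1)`. -/
noncomputable def Bfun (l : List ℕ) : SymF := l.foldl (fun acc a => Bop a acc) 1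

end

/-- The touch set `{0} ∪ Des(c)` of a composition `c` of `n`:
the set of partial sums `c₁ + ⋯ + c_i` for `0 ≤ i < ℓ(c)` (0-based touch rows). -/
def touchSet {n : ℕ} (c : Composition n) : Finset ℕ :=
  (Finset.range c.length).image fun i => c.sizeUpTo i

/-- The descent set of a composition: its proper nonzero partial sums. -/
def DesSet {n : ℕ} (c : Composition n) : Finset ℕ := (touchSet c).erase 0

/-- `Refines β α` means `β ≤ α`: `β` is finer than `α`, i.e. `Des(α) ⊆ Des(β)`. -/
abbrev Refines {n : ℕ} (β α : Composition n) : Prop := touchSet α ⊆ touchSet β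

/-- `doffC α β = doff_α(DP(β))` for `β ≤ α`:
`∑_{k=1}^{ℓ(α)} (ℓ(α)-k) r_k` where `r_k` is the number of parts of `β`
lying inside the `k`-th part of `α`. -/
def doffC {n : ℕ} (α β : Composition n) : ℕ :=
  ∑ k ∈ Finset.range α.length,
    (α.length - 1 - k) *
      ((touchSet β).filter fun s => α.sizeUpTo k ≤ s ∧ s < α.sizeUpTo (k + 1)).card

/-- The reversed composition. -/
def revC {n : ℕ} (c : Composition n) : Composition n :=
  ⟨c.blocks.reverse, fun hi => c.blocks_pos (List.mem_reverse.mp hi), by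
    rw [List.sum_reverse]; exact c.blocks_sum⟩

/-- A Dyck path from `(0,0)` to `(n,n)`, encoded by its arm sequence:
`arm i` is the number of cells between the path and the diagonal in row `i+1`
(rows are 0-indexed here). -/
structure DyckPath (n : ℕ) where
  arm : ℕ → ℕ
  arm_zero : 0 < n → arm 0 = 0
  arm_step : ∀ i, i + 1 < n → arm (i + 1) ≤ arm i + 1
  arm_outside : ∀ i, n ≤ i → arm i = 0

/-- `area(D) = ∑ᵢ aᵢ`. -/
def area {n : ℕ} (D : DyckPath n) : ℕ := ∑ i ∈ Finset.range n, D.arm i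

/-- `dinv(D) = #{(i,j) : i < j, aᵢ - aⱼ ∈ {0,1}}`. -/
def dinv {n : ℕ} (D : DyckPath n) : ℕ :=
  ((Finset.range n ×ˢ Finset.range n).filter fun p =>
      p.1 < p.2 ∧ (D.arm p.1 = D.arm p.2 ∨ D.arm p.1 = D.arm p.2 + 1)).card

/-- `IsTouch D α` says that `touch(D) = α`: the rows where the arm vanishes are
exactly the partial sums of `α`. -/
def IsTouch {n : ℕ} (D : DyckPath n) (α : Composition n) : Prop :=
  ∀ i < n, (D.arm i = 0 ↔ i ∈ touchSet α)

/-- `doff_α(D)`, for a path `D` whose touch composition refines `α`. -/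
def doffD {n : ℕ} (α : Composition n) (D : DyckPath n) : ℕ :=
  ∑ k ∈ Finset.range α.length,
    (α.length - 1 - k) *
      ((Finset.Ico (α.sizeUpTo k) (α.sizeUpTo (k + 1))).filter fun i => D.arm i = 0).card

instance {n : ℕ} : DecidableEq (Composition n) := fun a b =>
  decidable_of_iff (a.blocks = b.blocks) ⟨fun h => by cases a; cases b; simpa using h,
    fun h => by rw [h]⟩

noncomputable section

/-- Plethystic evaluation at the alphabet `1 - q`: the algebra map `p_k ↦ 1 - q^k`. -/
noncomputable def evOneMinusQ : SymF →ₐ[F] F := MvPolynomial.aeval fun k => 1 - q ^ (k + 1)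

/-- The cells of the Young diagram of a partition given as a (weakly decreasing)
list of parts: `(i, j)` with `j < lᵢ` (row `i`, column `j`, both 0-based). -/
def pcells (l : List ℕ) : Finset (ℕ × ℕ) :=
  (Finset.range l.length ×ˢ Finset.range (l.foldr max 0)).filter fun c => c.2 < l.getD c.1 0

/-- The arm of a cell: number of cells strictly to its right in its row. -/
def armC (l : List ℕ) (c : ℕ × ℕ) : ℕ := l.getD c.1 0 - c.2 - 1

/-- The leg of a cell: number of cells of the diagram in its column in later rows. -/
def legC (l : List ℕ) (c : ℕ × ℕ) : ℕ :=
  ((Finset.Ico (c.1 + 1) l.length).filter fun i => c.2 < l.getD i 0).card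

/-- The `k`-th part (`k ≥ 1`) of the conjugate partition: `μ'_k = #{i : μᵢ ≥ k}`. -/
def conjPart (l : List ℕ) (k : ℕ) : ℕ := l.countP fun x => k ≤ x

/-- The multiplicity `m_i(μ')` of `i` among the parts of the conjugate partition. -/
def mConj (l : List ℕ) (i : ℕ) : ℕ :=
  ((Finset.Icc 1 l.headI).filter fun k => conjPart l k = i).card

/-- `n(μ') = ∑ (k-1) μ'_k`. -/
def nConj (l : List ℕ) : ℕ := ∑ k ∈ Finset.Icc 1 l.headI, (k - 1) * conjPart l k

/-- The `q`-Pochhammer symbol `(q;q)_k = ∏_{j=1}^k (1 - q^j)` as an element of `F`. -/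
noncomputable def qpoch (k : ℕ) : F := ∏ j ∈ Finset.Icc 1 k, (1 - q ^ j)

end

def ltPairs (X Y : Finset ℕ) : ℕ := ∑ s ∈ X, #{t ∈ Y | s < t}

section LtPairs

variable {X Y Z : Finset ℕ}

lemma ltPairs_union_left (h : Disjoint X Y) : ltPairs (X ∪ Y) Z = ltPairs X Z + ltPairs Y Z :=
  sum_union h

lemma ltPairs_union_right (h : Disjoint Y Z) : ltPairs X (Y ∪ Z) = ltPairs X Y + ltPairs X Z := by
  simp only [ltPairs, ← sum_add_distrib, filter_union,
    card_union_of_disjoint (disjoint_filter_filter h)]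

lemma ltPairs_eq_sum_right (X Y : Finset ℕ) : ltPairs X Y = ∑ t ∈ Y, #{s ∈ X | s < t} := by
  simp only [ltPairs, card_filter]
  exact sum_comm

lemma ltPairs_insert_insert {m : ℕ} (hX : ∀ x ∈ X, x < m) (hY : ∀ y ∈ Y, y < m) :
    ltPairs (insert m X) (insert m Y) = ltPairs X Y + #X := by
  have hmX : m ∉ X := fun h => (hX m h).false
  have hmY : m ∉ Y := fun h => (hY m h).false
  have hm : #{t ∈ insert m Y | m < t} = 0 := by
    rw [card_eq_zero, filter_eq_empty_iff]
    intro t ht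
    rcases mem_insert.mp ht with rfl | ht
    · exact lt_irrefl t
    · exact (hY t ht).not_gt
  have hx : ∀ x ∈ X, #{t ∈ insert m Y | x < t} = #{t ∈ Y | x < t} + 1 := fun x hx => by
    rw [filter_insert, if_pos (hX x hx), card_insert_of_notMem fun h => hmY (mem_filter.mp h).1]
  rw [ltPairs, sum_insert hmX, hm, zero_add, sum_congr rfl hx, sum_add_distrib, card_eq_sum_ones]
  rfl

lemma ltPairs_image_const_sub {m : ℕ} (hX : ∀ x ∈ X, x ≤ m) (hY : ∀ y ∈ Y, y ≤ m) :
    ltPairs (X.image (m - ·)) (Y.image (m - ·)) = ltPairs Y X := by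
  have hinj : ∀ {W : Finset ℕ}, (∀ w ∈ W, w ≤ m) → Set.InjOn (m - ·) W :=
    fun hW a ha b hb (h : m - a = m - b) => by have := hW a ha; have := hW b hb; omega
  rw [ltPairs, sum_image (hinj hX), ltPairs_eq_sum_right]
  refine sum_congr rfl fun x hx => ?_
  rw [filter_image, card_image_of_injOn ((hinj hY).mono (filter_subset _ _))]
  congr 1
  refine filter_congr fun y hy => ?_
  have := hX x hx; have := hY y hy
  omega

end LtPairs

namespace Composition

variable {n : ℕ}

lemma sizeUpTo_strictMonoOn (c : Composition n) : StrictMonoOn c.sizeUpTo (Set.Iic c.length) :=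
  fun _ _ _ hj hij => (c.sizeUpTo_strict_mono (hij.trans_le hj)).trans_le (c.monotone_sizeUpTo hij)

lemma sizeUpTo_injOn_range (c : Composition n) : Set.InjOn c.sizeUpTo (range c.length) :=
  c.sizeUpTo_strictMonoOn.injOn.mono fun _ hi => (mem_range.mp hi).le

lemma lt_sizeUpTo_iff_index_lt (c : Composition n) (j : Fin n) (i : ℕ) :
    (j : ℕ) < c.sizeUpTo i ↔ (c.index j : ℕ) < i := by
  constructor
  · intro h
    by_contra! hi
    exact (h.trans_le (c.monotone_sizeUpTo hi)).not_ge (c.sizeUpTo_index_le j)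
  · intro h
    exact (c.lt_sizeUpTo_index_succ j).trans_le (c.monotone_sizeUpTo h)

end Composition

section TouchSet

variable {n : ℕ}

lemma insert_touchSet (c : Composition n) :
    insert n (touchSet c) = (range (c.length + 1)).image c.sizeUpTo := by
  rw [range_add_one, image_insert, c.sizeUpTo_length, touchSet]

lemma lt_of_mem_touchSet {c : Composition n} {s : ℕ} (hs : s ∈ touchSet c) : s < n := by
  obtain ⟨i, hi, rfl⟩ := mem_image.mp hs
  exact (c.sizeUpTo_strict_mono (mem_range.mp hi)).trans_le (c.sizeUpTo_le _)

lemma notMem_touchSet (c : Composition n) : n ∉ touchSet c :=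
  fun h => (lt_of_mem_touchSet h).false

lemma zero_mem_touchSet (c : Composition n) (hn : n ≠ 0) : 0 ∈ touchSet c := by
  have h : 0 ∈ insert n (touchSet c) := by
    rw [insert_touchSet]
    exact mem_image.mpr ⟨0, mem_range.mpr (Nat.succ_pos _), c.sizeUpTo_zero⟩
  exact (mem_insert.mp h).resolve_left (Ne.symm hn)

lemma card_touchSet (c : Composition n) : #(touchSet c) = c.length := by
  rw [touchSet, card_image_of_injOn c.sizeUpTo_injOn_range, card_range]

lemma card_touchSet_filter_gt (c : Composition n) (j : Fin n) :
    #{t ∈ touchSet c | (j : ℕ) < t} = c.length - 1 - c.index j := by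
  rw [touchSet, filter_image,
    card_image_of_injOn (c.sizeUpTo_injOn_range.mono (filter_subset _ _))]
  simp only [c.lt_sizeUpTo_iff_index_lt]
  have hfilter : {i ∈ range c.length | (c.index j : ℕ) < i} = Ioo (c.index j : ℕ) c.length := by
    ext i
    simp only [mem_filter, mem_range, mem_Ioo]
    omega
  rw [hfilter, Nat.card_Ioo]
  omega

lemma map_val_boundaries (c : Composition n) :
    c.boundaries.map Fin.valEmbedding = insert n (touchSet c) := by
  rw [insert_touchSet]
  ext s
  simp only [Composition.boundaries, Composition.boundary, map_map, mem_map, mem_image, mem_univ,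
    true_and, mem_range, Fin.exists_iff]
  exact ⟨fun ⟨i, hi, h⟩ => ⟨i, hi, h⟩, fun ⟨i, hi, h⟩ => ⟨i, hi, h⟩⟩

lemma touchSet_injective : Function.Injective (touchSet : Composition n → Finset ℕ) := by
  intro a b h
  have hb : a.boundaries = b.boundaries := by
    rw [← map_inj (f := Fin.valEmbedding), map_val_boundaries, map_val_boundaries, h]
  exact (compositionEquiv n).injective (CompositionAsSet.ext hb)

/-- A right inverse of `touchSet` on touch sets; other `S` give junk. -/
def ofTouchSet (n : ℕ) (S : Finset ℕ) : Composition n :=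
  CompositionAsSet.toComposition
    { boundaries := insert 0 (univ.filter fun i : Fin (n + 1) => (i : ℕ) ∈ insert n S)
      zero_mem := mem_insert_self _ _
      getLast_mem := mem_insert_of_mem (by simp) }

lemma touchSet_ofTouchSet {S : Finset ℕ} (h0 : n ≠ 0 → 0 ∈ S) (hS : ∀ s ∈ S, s < n) :
    touchSet (ofTouchSet n S) = S := by
  have hnS : n ∉ S := fun h => (hS n h).false
  have hins : insert n (touchSet (ofTouchSet n S)) = insert n S := by
    rw [← map_val_boundaries, ofTouchSet, CompositionAsSet.toComposition_boundaries]
    ext s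
    simp only [mem_map, mem_insert, mem_filter, mem_univ, true_and, Fin.valEmbedding_apply]
    constructor
    · rintro ⟨i, rfl | hi, rfl⟩
      · rcases eq_or_ne n 0 with hn | hn
        · exact Or.inl hn.symm
        · exact Or.inr (h0 hn)
      · exact hi
    · rintro (rfl | hs)
      · exact ⟨Fin.last s, Or.inr (Or.inl rfl), rfl⟩
      · exact ⟨⟨s, (hS s hs).trans (Nat.lt_succ_self n)⟩, Or.inr (Or.inr hs), rfl⟩
  simpa only [erase_insert (notMem_touchSet _), erase_insert hnS] using congrArg (·.erase n) hins

end TouchSet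

section Doff

variable {n : ℕ}

lemma doffC_eq_ltPairs (A B : Composition n) : doffC A B = ltPairs (touchSet B) (touchSet A) := by
  simp only [doffC, ltPairs, card_filter, mul_sum]
  rw [sum_comm]
  refine sum_congr rfl fun s hs => ?_
  let j : Fin n := ⟨s, lt_of_mem_touchSet hs⟩
  have hblock : ∀ k, (A.sizeUpTo k ≤ s ∧ s < A.sizeUpTo (k + 1)) ↔ k = A.index j := fun k => by
    rw [← not_lt, A.lt_sizeUpTo_iff_index_lt j, A.lt_sizeUpTo_iff_index_lt j]
    omega
  simp only [hblock, mul_ite, mul_one, mul_zero]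
  rw [sum_ite_eq' _ _ (fun k => A.length - 1 - k), if_pos (mem_range.mpr (A.index j).isLt),
    ← card_filter]
  exact (card_touchSet_filter_gt A j).symm

lemma length_revC (c : Composition n) : (revC c).length = c.length :=
  List.length_reverse

lemma sizeUpTo_revC (c : Composition n) (i : ℕ) :
    (revC c).sizeUpTo i = n - c.sizeUpTo (c.length - i) := by
  have hsplit := List.sum_take_add_sum_drop c.blocks (c.length - i)
  rw [c.blocks_sum] at hsplit
  simp only [Composition.sizeUpTo, revC, List.take_reverse, List.sum_reverse]
  exact Nat.eq_sub_of_add_eq' hsplit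

lemma insert_touchSet_revC (c : Composition n) :
    insert n (touchSet (revC c)) = (insert n (touchSet c)).image (n - ·) := by
  rw [insert_touchSet, insert_touchSet, length_revC, image_image]
  ext s
  simp only [mem_image, mem_range, Function.comp, sizeUpTo_revC]
  constructor
  · rintro ⟨i, hi, rfl⟩
    exact ⟨c.length - i, by omega, rfl⟩
  · rintro ⟨i, hi, rfl⟩
    exact ⟨c.length - i, by omega, by rw [Nat.sub_sub_self (by omega)]⟩

lemma doffC_revC_add_length (A B : Composition n) :
    doffC (revC A) (revC B) + B.length = ltPairs (touchSet A) (touchSet B) + A.length := by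
  have hlt : ∀ c : Composition n, ∀ x ∈ touchSet c, x < n := fun _ _ => lt_of_mem_touchSet
  have hle : ∀ c : Composition n, ∀ x ∈ insert n (touchSet c), x ≤ n := fun c x hx =>
    (mem_insert.mp hx).elim le_of_eq fun hx => (hlt c x hx).le
  calc doffC (revC A) (revC B) + B.length
      = ltPairs (insert n (touchSet (revC B))) (insert n (touchSet (revC A))) := by
        rw [doffC_eq_ltPairs, ltPairs_insert_insert (hlt _) (hlt _), card_touchSet, length_revC]
    _ = ltPairs ((insert n (touchSet B)).image (n - ·))
          ((insert n (touchSet A)).image (n - ·)) := by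
        rw [insert_touchSet_revC, insert_touchSet_revC]
    _ = ltPairs (touchSet A) (touchSet B) + A.length := by
        rw [ltPairs_image_const_sub (hle B) (hle A), ltPairs_insert_insert (hlt A) (hlt B),
          card_touchSet]

end Doff

section Refines

variable {n : ℕ} {γ β α : Composition n}

lemma touchSet_ofTouchSet_of_subset {U : Finset ℕ} (hαU : touchSet α ⊆ U)
    (hUγ : U ⊆ touchSet γ) :
    touchSet (ofTouchSet n U) = U :=
  touchSet_ofTouchSet (fun hn => hαU (zero_mem_touchSet α hn))
    (fun _ hs => lt_of_mem_touchSet (hUγ hs))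

lemma sum_refines_between_eq_sum_powerset {M : Type*} [AddCommMonoid M] (h : Refines γ α)
    (g : Finset ℕ → M) :
    ∑ β ∈ univ.filter (fun β : Composition n => Refines γ β ∧ Refines β α),
        g (touchSet β \ touchSet α) =
      ∑ S ∈ (touchSet γ \ touchSet α).powerset, g S := by
  have hunion : ∀ S ⊆ touchSet γ \ touchSet α,
      touchSet (ofTouchSet n (touchSet α ∪ S)) = touchSet α ∪ S := fun S hS =>
    touchSet_ofTouchSet_of_subset subset_union_left (union_subset h (hS.trans sdiff_subset))
  refine sum_nbij' (fun β => touchSet β \ touchSet α) (fun S => ofTouchSet n (touchSet α ∪ S))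
    ?_ ?_ ?_ ?_ fun _ _ => rfl
  · intro β hβ
    exact mem_powerset.mpr (sdiff_subset_sdiff (mem_filter.mp hβ).2.1 subset_rfl)
  · intro S hS
    have hS := mem_powerset.mp hS
    refine mem_filter.mpr ⟨mem_univ _, ?_, ?_⟩
    · change touchSet _ ⊆ touchSet γ
      rw [hunion S hS]
      exact union_subset h (hS.trans sdiff_subset)
    · change touchSet α ⊆ touchSet _
      rw [hunion S hS]
      exact subset_union_left
  · intro β hβ
    have hβα := (mem_filter.mp hβ).2.2
    rw [union_sdiff_of_subset hβα]
    exact touchSet_injective (touchSet_ofTouchSet_of_subset hβα subset_rfl)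
  · intro S hS
    have hS := mem_powerset.mp hS
    rw [hunion S hS, union_sdiff_cancel_left (disjoint_of_subset_right hS disjoint_sdiff)]

lemma neg_one_zpow_mul_zpow_doffC {K : Type*} [Field K] (x : K) (hγβ : Refines γ β)
    (hβα : Refines β α) :
    (-1 : K) ^ ((α.length : ℤ) - β.length) *
        x ^ (((α.length : ℤ) - β.length) + (doffC β γ : ℤ) - (doffC (revC α) (revC β) : ℤ)) =
      x ^ ltPairs (touchSet γ \ touchSet α) (touchSet α) *
        ∏ t ∈ touchSet β \ touchSet α, -x ^ #{s ∈ touchSet γ \ touchSet α | s < t} := by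
  set S := touchSet β \ touchSet α
  set D := touchSet γ \ touchSet α
  have hβ : touchSet β = touchSet α ∪ S := (union_sdiff_of_subset hβα).symm
  have hγ : touchSet γ = touchSet α ∪ D := (union_sdiff_of_subset (hβα.trans hγβ)).symm
  have hlen : β.length = α.length + #S := by
    rw [← card_touchSet, ← card_touchSet, hβ, card_union_of_disjoint disjoint_sdiff]
  have hγ_pairs : ltPairs (touchSet γ) (touchSet β) =
      ltPairs (touchSet α) (touchSet β) + ltPairs D (touchSet β) := by
    rw [hγ, ltPairs_union_left disjoint_sdiff]
  have hD_pairs : ltPairs D (touchSet β) = ltPairs D (touchSet α) + ltPairs D S := by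
    rw [hβ, ltPairs_union_right disjoint_sdiff]
  have hrev := doffC_revC_add_length α β
  have hexp : ((α.length : ℤ) - β.length) + (doffC β γ : ℤ) - (doffC (revC α) (revC β) : ℤ) =
      ((ltPairs D (touchSet α) + ∑ t ∈ S, #{s ∈ D | s < t} : ℕ) : ℤ) := by
    rw [← ltPairs_eq_sum_right, doffC_eq_ltPairs β γ]
    push_cast
    omega
  have hsign : (α.length : ℤ) - β.length = -(#S : ℤ) := by omega
  rw [hexp, hsign, zpow_natCast, zpow_neg, zpow_natCast, prod_neg, prod_pow_eq_pow_sum, pow_add,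
    ← inv_pow, inv_neg, inv_one]
  ring

end Refines

lemma prod_one_sub_pow_card_filter_lt_eq_zero {R : Type*} [CommRing R] (x : R) {D : Finset ℕ}
    (hD : D.Nonempty) : ∏ t ∈ D, (1 - x ^ #{s ∈ D | s < t}) = 0 := by
  refine prod_eq_zero (min'_mem D hD) ?_
  rw [card_eq_zero.mpr (filter_eq_empty_iff.mpr fun s hs => not_lt.mpr (min'_le D s hs)),
    pow_zero, sub_self]

/-- for compositions `γ ≤ α` of `n`,
`∑_{β : γ ≤ β ≤ α} (-1)^{ℓ(α)-ℓ(β)}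
  q^{ℓ(α)-ℓ(β) + doff_β(DP(γ)) - doff_{rev α}(DP(rev β))}`
is `1` if `γ = α` and `0` if `γ < α`. -/
theorem stmt11 (n : ℕ) (γ α : Composition n) (hγ : Refines γ α) :
    ∑ β ∈ Finset.univ.filter fun β : Composition n => Refines γ β ∧ Refines β α,
        ((-1 : F) ^ ((α.length : ℤ) - β.length)) *
          q ^ (((α.length : ℤ) - β.length) + (doffC β γ : ℤ) -
            (doffC (revC α) (revC β) : ℤ)) =
      if γ = α then 1 else 0 := by
  set D := touchSet γ \ touchSet α
  calc _ = ∑ β ∈ Finset.univ.filter fun β : Composition n => Refines γ β ∧ Refines β α,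
          q ^ ltPairs D (touchSet α) * ∏ t ∈ touchSet β \ touchSet α, -q ^ #{s ∈ D | s < t} :=
        sum_congr rfl fun β hβ => (mem_filter.mp hβ).2.elim (neg_one_zpow_mul_zpow_doffC q)
    _ = ∑ S ∈ D.powerset, q ^ ltPairs D (touchSet α) * ∏ t ∈ S, -q ^ #{s ∈ D | s < t} :=
        sum_refines_between_eq_sum_powerset hγ fun S =>
          q ^ ltPairs D (touchSet α) * ∏ t ∈ S, -q ^ #{s ∈ D | s < t}
    _ = q ^ ltPairs D (touchSet α) * ∏ t ∈ D, (1 - q ^ #{s ∈ D | s < t}) := by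
        simp_rw [← mul_sum, sub_eq_add_neg, prod_one_add]
    _ = if γ = α then 1 else 0 := by
        split_ifs with h
        · subst h
          simp [D, ltPairs]
        · have hD : D.Nonempty :=
            sdiff_nonempty.mpr fun hγα => h (touchSet_injective (hγα.antisymm hγ))
          rw [prod_one_sub_pow_card_filter_lt_eq_zero q hD, mul_zero]
end

section
/- The operators C_m satisfy C_m C_{m+1} = (1/q) C_{m+1} C_m for every integer m. -/
open Finset MvPolynomial

/-!
Write `C_m = c_m ∑_r q^{-r} h_{m+r} D_r` with `c_m = (-1/q)^{m-1}` and `D_r = h_r[X(1-q)]^⊥`.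
Since `D_r` is the coefficient of `z^r` in the algebra map `f ↦ f[X + (1-q)z]`, it satisfies a
Leibniz rule, and `D_j h_n = h_j[1-q] h_{n-j}` (from Newton's identity). Hence
`C_u C_v P = c_u c_v ∑_{a,s} q^{-a-s} K(u+a, v+s) D_a D_s P` with the kernel
`K(M, N) = ∑_j h_j[1-q] q^{-j} h_{M+j} h_{N-j}`. Shifting the summation index of `K` gives
`q K(M, N) = K(M+1, N-1) + q (h_M h_N - h_{M+1} h_{N-1})`, and for `(M, N) = (m+a, m+1+s)`
the correction term is antisymmetric in `(a, s)` while `D_a D_s = D_s D_a`, so it sums to zero.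
-/

noncomputable section

lemma q_ne_zero : q ≠ 0 := RatFunc.X_ne_zero

lemma pp_succ (k : ℕ) : pp (k + 1) = X k := rfl

lemma hh_of_neg {M : ℤ} (h : M < 0) : hh M = 0 := by simp [hh, not_le.mpr h]

lemma hh_natCast (n : ℕ) : hh n = hN n := by simp [hh]

lemma hh_zero : hh 0 = 1 := by rw [← Nat.cast_zero, hh_natCast, hN]

/-- The plethystic evaluation `h_j[1 - q]`. -/
def hOneSubQ (j : ℕ) : F := if j = 0 then 1 else 1 - q

@[simp] lemma hOneSubQ_zero : hOneSubQ 0 = 1 := rfl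

lemma hOneSubQ_of_ne_zero {j : ℕ} (h : j ≠ 0) : hOneSubQ j = 1 - q := if_neg h

lemma Dq_add (r : ℕ) (P Q : SymF) : Dq r (P + Q) = Dq r P + Dq r Q := by
  simp [Dq]

lemma Dq_smul (r : ℕ) (c : F) (P : SymF) : Dq r (c • P) = c • Dq r P := by
  simp [Dq]

lemma Dq_sum {ι : Type*} (r : ℕ) (t : Finset ι) (f : ι → SymF) :
    Dq r (∑ i ∈ t, f i) = ∑ i ∈ t, Dq r (f i) := by
  simp [Dq]

lemma Dq_zero (r : ℕ) : Dq r 0 = 0 := by simp [Dq]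

lemma Dq_C (r : ℕ) (c : F) : Dq r (C c) = if r = 0 then C c else 0 := by
  simp [Dq, Tq, Polynomial.coeff_C]

lemma Dq_eq_zero_of_natDegree_lt {P : SymF} {r : ℕ} (h : (Tq P).natDegree < r) : Dq r P = 0 :=
  Polynomial.coeff_eq_zero_of_natDegree_lt h

lemma Dq_X_mul (j k : ℕ) (R : SymF) :
    Dq j (X k * R) = X k * Dq j R +
      if k + 1 ≤ j then (1 - q ^ (k + 1)) • Dq (j - (k + 1)) R else 0 := by
  simp only [Dq, map_mul, Tq, aeval_X, add_mul, Polynomial.coeff_add, mul_assoc,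
    Polynomial.coeff_C_mul, Polynomial.coeff_X_pow_mul']
  split_ifs <;> simp [smul_eq_C_mul]

lemma Dq_comm (P : SymF) (a s : ℕ) : Dq a (Dq s P) = Dq s (Dq a P) := by
  induction P using MvPolynomial.induction_on generalizing a s with
  | C c =>
    simp only [Dq_C, apply_ite (Dq a), apply_ite (Dq s), Dq_zero]
    split_ifs <;> simp
  | add P Q hP hQ => simp only [Dq_add, hP, hQ]
  | mul_X P k hP =>
    rw [mul_comm P (X k), Dq_X_mul s, Dq_X_mul a, Dq_add, Dq_add, Dq_X_mul a, Dq_X_mul s,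
      apply_ite (Dq a), apply_ite (Dq s), Dq_zero, Dq_zero, Dq_smul, Dq_smul,
      hP a s, hP (a - (k + 1)) s, hP a (s - (k + 1))]
    abel

lemma hN_succ_newton (n : ℕ) :
    ((n : F) + 1) • hN (n + 1) = ∑ k ∈ range (n + 1), X k * hN (n - k) := by
  rw [hN, smul_smul, mul_inv_cancel₀ (Nat.cast_add_one_ne_zero n), one_smul]
  rfl

/-- Newton's identity `M h_M = ∑_{k ≥ 1} p_k h_{M-k}` at integer `M`. -/
lemma sum_X_mul_hh (n : ℕ) (M : ℤ) (hM : M ≤ n + 1) :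
    ∑ k ∈ range (n + 1), X k * hh (M - 1 - k) = (M : F) • hh M := by
  rcases lt_or_ge M 1 with h | h
  · rw [sum_eq_zero fun k _ => by rw [hh_of_neg (by omega), mul_zero]]
    rcases (by omega : M = 0 ∨ M < 0) with rfl | h'
    · simp
    · rw [hh_of_neg h', smul_zero]
  · obtain ⟨m, rfl⟩ : ∃ m : ℕ, M = m + 1 := ⟨(M - 1).toNat, by omega⟩
    rw [eventually_constant_sum (N := m + 1) (fun k hk => by rw [hh_of_neg (by omega), mul_zero])
      (by omega), sum_congr rfl fun k hk => ?_, ← hN_succ_newton,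
      show (m : ℤ) + 1 = (m + 1 : ℕ) by push_cast; rfl, hh_natCast]
    · push_cast; rfl
    · rw [show (m : ℤ) + 1 - 1 - k = (m - k : ℕ) by have := mem_range.mp hk; omega, hh_natCast]

lemma sum_one_sub_pow_mul_hOneSubQ {j n : ℕ} (hj : j ≤ n) :
    ∑ k ∈ range n, (if k + 1 ≤ j then (1 - q ^ (k + 1)) * hOneSubQ (j - 1 - k) else 0) =
      j * (1 - q) := by
  rw [eventually_constant_sum (fun k hk => if_neg (by omega)) hj,
    sum_congr rfl fun k hk => if_pos (by have := mem_range.mp hk; omega)]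
  rcases j with _ | i
  · simp
  rw [sum_range_succ, Nat.add_sub_cancel, Nat.sub_self, hOneSubQ_zero,
    sum_congr rfl fun k hk => by rw [hOneSubQ_of_ne_zero (by have := mem_range.mp hk; omega)]]
  have hgeom := geom_sum_mul_neg q i
  simp only [sub_mul, one_mul, sum_sub_distrib, sum_const, card_range, nsmul_eq_mul, pow_succ,
    ← sum_mul]
  push_cast
  linear_combination (-q) * hgeom

lemma Dq_hN (n j : ℕ) : Dq j (hN n) = hOneSubQ j • hh (n - j) := by
  induction n using Nat.strong_induction_on generalizing j with
  | _ n ih =>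
  rcases n with _ | n
  · rcases j with _ | j
    · simp [hN, Dq, hh_zero]
    · rw [hh_of_neg (by omega), smul_zero]
      simp [hN, Dq, Polynomial.coeff_one]
  have hterm : ∀ k ∈ range (n + 1), Dq j (X k * hN (n - k)) =
      hOneSubQ j • (X k * hh ((n + 1 - j : ℤ) - 1 - k)) +
        (if k + 1 ≤ j then (1 - q ^ (k + 1)) * hOneSubQ (j - 1 - k) else 0) •
          hh (n + 1 - j) := by
    intro k hk
    have hkn := mem_range.mp hk
    rw [Dq_X_mul, ih _ (by omega), mul_smul_comm,
      show ((n - k : ℕ) : ℤ) - j = (n + 1 - j : ℤ) - 1 - k by omega]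
    congr 1
    split_ifs with hkj
    · rw [ih _ (by omega), smul_smul, show j - 1 - k = j - (k + 1) by omega]
      congr 2
      omega
    · rw [zero_smul]
  have hscalar : (∑ k ∈ range (n + 1),
      if k + 1 ≤ j then (1 - q ^ (k + 1)) * hOneSubQ (j - 1 - k) else 0) • hh (n + 1 - j) =
        ((j : F) * (1 - q)) • hh (n + 1 - j) := by
    rcases le_or_gt j (n + 1) with hj | hj
    · rw [sum_one_sub_pow_mul_hOneSubQ hj]
    · rw [hh_of_neg (by omega), smul_zero, smul_zero]
  rw [hN, Dq_smul, Dq_sum]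
  simp only [pp_succ]
  rw [sum_congr rfl hterm, sum_add_distrib, ← smul_sum, ← sum_smul, sum_X_mul_hh n _ (by omega),
    hscalar, smul_smul, ← add_smul, smul_smul, Nat.cast_succ]
  congr 1
  rcases eq_or_ne j 0 with rfl | hj
  · simp [field]
  · rw [hOneSubQ_of_ne_zero hj]
    push_cast
    field_simp
    ring

lemma Dq_hh (M : ℤ) (j : ℕ) : Dq j (hh M) = hOneSubQ j • hh (M - j) := by
  rcases lt_or_ge M 0 with h | h
  · rw [hh_of_neg h, hh_of_neg (by omega), Dq_zero, smul_zero]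
  · obtain ⟨n, rfl⟩ := Int.eq_ofNat_of_zero_le h
    rw [hh_natCast, Dq_hN]

lemma Dq_hh_mul (r : ℕ) (M : ℤ) (Q : SymF) :
    Dq r (hh M * Q) = ∑ j ∈ range (r + 1), hOneSubQ j • (hh (M - j) * Dq (r - j) Q) := by
  rw [Dq, map_mul, Polynomial.coeff_mul, Nat.sum_antidiagonal_eq_sum_range_succ_mk]
  exact sum_congr rfl fun j _ => by rw [← Dq, Dq_hh, smul_mul_assoc]; rfl

lemma Cop_eq_sum (u : ℤ) (Q : SymF) {N : ℕ} (hQ : ∀ r, N ≤ r → Dq r Q = 0) :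
    Cop u Q = (-q⁻¹ : F) ^ (u - 1) •
      ∑ r ∈ range N, (q⁻¹ : F) ^ r • (hh (u + r) * Dq r Q) := by
  have hvanish : ∀ n : ℕ, (∀ r, n ≤ r → Dq r Q = 0) →
      ∀ r, n ≤ r → (q⁻¹ : F) ^ r • (hh (u + r) * Dq r Q) = 0 := fun n hn r hr => by
    rw [hn r hr, mul_zero, smul_zero]
  rw [Cop, ← eventually_constant_sum (hvanish _ fun r hr => Dq_eq_zero_of_natDegree_lt hr)
      (le_max_left _ N), eventually_constant_sum (hvanish _ hQ) (le_max_right _ N)]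

lemma exists_Dq_Dq_eq_zero (P : SymF) : ∃ N : ℕ,
    (∀ s, N ≤ s → Dq s P = 0) ∧ ∀ a s, N ≤ a → Dq a (Dq s P) = 0 := by
  set d := (Tq P).natDegree
  refine ⟨d + 1 + (range (d + 1)).sup fun s => (Tq (Dq s P)).natDegree,
    fun s hs => Dq_eq_zero_of_natDegree_lt (by omega), fun a s ha => ?_⟩
  rcases lt_or_ge d s with hs | hs
  · rw [Dq_eq_zero_of_natDegree_lt hs, Dq_zero]
  · have hle := le_sup (f := fun s => (Tq (Dq s P)).natDegree)
      (mem_range.mpr (by omega : s < d + 1))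
    exact Dq_eq_zero_of_natDegree_lt (by omega)

def qConv (M N : ℤ) : SymF :=
  ∑ j ∈ range (N.toNat + 1), (q⁻¹ : F) ^ j • (hh (M + j) * hh (N - j))

/-- The kernel `K` of the header. -/
def compKernel (M N : ℤ) : SymF :=
  ∑ j ∈ range (N.toNat + 1), (hOneSubQ j * (q⁻¹ : F) ^ j) • (hh (M + j) * hh (N - j))

lemma compKernel_eq_qConv (M N : ℤ) :
    compKernel M N = (1 - q) • qConv M N + q • (hh M * hh N) := by
  rw [compKernel, qConv, smul_sum, sum_range_succ', sum_range_succ' _ N.toNat,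
    sum_congr rfl fun i _ => by rw [hOneSubQ_of_ne_zero i.succ_ne_zero, mul_smul]]
  simp only [hOneSubQ_zero, pow_zero, mul_one, one_smul, CharP.cast_eq_zero, add_zero, sub_zero]
  rw [add_assoc, ← add_smul]
  norm_num

lemma q_smul_qConv (M N : ℤ) : q • qConv M N = qConv (M + 1) (N - 1) + q • (hh M * hh N) := by
  rcases lt_or_ge N 1 with h | h
  · rw [qConv, qConv, show N.toNat = 0 by omega, show (N - 1).toNat = 0 by omega]
    simp [hh_of_neg (by omega : N - 1 < 0)]
  · rw [qConv, qConv, show N.toNat = (N - 1).toNat + 1 by omega, smul_sum, sum_range_succ']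
    congr 1
    · refine sum_congr rfl fun i _ => ?_
      rw [smul_smul, pow_succ, mul_left_comm, mul_inv_cancel₀ q_ne_zero, mul_one]
      push_cast
      ring_nf
    · simp

lemma q_smul_compKernel (M N : ℤ) : q • compKernel M N =
    compKernel (M + 1) (N - 1) + q • (hh M * hh N - hh (M + 1) * hh (N - 1)) := by
  rw [compKernel_eq_qConv, compKernel_eq_qConv, smul_add, smul_comm q (1 - q), q_smul_qConv]
  simp only [smul_eq_C_mul, map_sub, map_one]
  ring

lemma sum_hh_mul_Dq_hh_mul (u M : ℤ) (Q : SymF) {A R : ℕ} (hQ : ∀ a, A ≤ a → Dq a Q = 0)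
    (hR : A + M.toNat + 1 ≤ R) :
    ∑ r ∈ range R, (q⁻¹ : F) ^ r • (hh (u + r) * Dq r (hh M * Q)) =
      ∑ a ∈ range A, (q⁻¹ : F) ^ a • (compKernel (u + a) M * Dq a Q) := by
  set f : ℕ → ℕ → SymF := fun j a =>
    ((q⁻¹ : F) ^ (j + a) * hOneSubQ j) • (hh (u + (j + a : ℕ)) * (hh (M - j) * Dq a Q))
  have hdiag (r : ℕ) : ∑ j ∈ range (r + 1), f j (r - j) =
      (q⁻¹ : F) ^ r • (hh (u + r) * Dq r (hh M * Q)) := by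
    rw [Dq_hh_mul, mul_sum, smul_sum]
    refine sum_congr rfl fun j hj => ?_
    dsimp only [f]
    rw [show j + (r - j) = r by have := mem_range.mp hj; omega, mul_smul_comm, smul_smul]
  have hvanish_j (j a : ℕ) (hj : M.toNat + 1 ≤ j) : f j a = 0 := by
    simp only [f, hh_of_neg (by omega : M - j < 0), zero_mul, mul_zero, smul_zero]
  have hvanish_a (j a : ℕ) (ha : A ≤ a) : f j a = 0 := by
    simp only [f, hQ a ha, mul_zero, smul_zero]
  calc ∑ r ∈ range R, (q⁻¹ : F) ^ r • (hh (u + r) * Dq r (hh M * Q))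
      = ∑ j ∈ range R, ∑ a ∈ range (R - j), f j a := by
        simp only [← hdiag, sum_range_diag_flip]
    _ = ∑ j ∈ range (M.toNat + 1), ∑ a ∈ range A, f j a := by
        rw [eventually_constant_sum (fun j hj => sum_eq_zero fun a _ => hvanish_j j a hj)
          (by omega : M.toNat + 1 ≤ R)]
        refine sum_congr rfl fun j hj => ?_
        exact eventually_constant_sum (fun a ha => hvanish_a j a ha)
          (by have := mem_range.mp hj; omega)
    _ = _ := by
        rw [sum_comm]
        refine sum_congr rfl fun a _ => ?_
        rw [compKernel, sum_mul, smul_sum]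
        refine sum_congr rfl fun j _ => ?_
        dsimp only [f]
        rw [smul_mul_assoc, smul_smul, mul_assoc, pow_add]
        congr 1
        · ring
        · congr 2
          push_cast
          ring

lemma Cop_Cop_eq_sum_compKernel (u v : ℤ) (P : SymF) {N : ℕ} (hP : ∀ s, N ≤ s → Dq s P = 0)
    (hDP : ∀ a s, N ≤ a → Dq a (Dq s P) = 0) :
    Cop u (Cop v P) = ((-q⁻¹ : F) ^ (u - 1) * (-q⁻¹ : F) ^ (v - 1)) •
      ∑ a ∈ range N, ∑ s ∈ range N,
        (q⁻¹ : F) ^ (a + s) • (compKernel (u + a) (v + s) * Dq a (Dq s P)) := by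
  set R := max ((Tq (Cop v P)).natDegree + 1) (N + (v + N).toNat + 1)
  have hR : (Tq (Cop v P)).natDegree + 1 ≤ R := le_max_left _ _
  rw [Cop_eq_sum u (N := R) _ fun r hr => Dq_eq_zero_of_natDegree_lt (by omega), mul_smul]
  congr 1
  rw [Cop_eq_sum v P hP]
  calc ∑ r ∈ range R, (q⁻¹ : F) ^ r • (hh (u + r) * Dq r ((-q⁻¹ : F) ^ (v - 1) •
          ∑ s ∈ range N, (q⁻¹ : F) ^ s • (hh (v + s) * Dq s P)))
      = (-q⁻¹ : F) ^ (v - 1) • ∑ s ∈ range N, (q⁻¹ : F) ^ s •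
          ∑ r ∈ range R, (q⁻¹ : F) ^ r • (hh (u + r) * Dq r (hh (v + s) * Dq s P)) := by
        simp only [Dq_smul, Dq_sum, mul_smul_comm, mul_sum, smul_sum]
        rw [sum_comm]
        simp only [smul_comm ((q⁻¹ : F) ^ _) ((-q⁻¹ : F) ^ (v - 1)),
          smul_comm ((q⁻¹ : F) ^ _) ((q⁻¹ : F) ^ _)]
    _ = _ := by
        congr 1
        rw [sum_comm]
        refine sum_congr rfl fun s hs => ?_
        rw [sum_hh_mul_Dq_hh_mul u (v + s) (Dq s P) (hDP · s) (by have := mem_range.mp hs; omega),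
          smul_sum]
        simp only [smul_smul, pow_add, mul_comm]

lemma q_smul_sum_compKernel (m : ℤ) (P : SymF) (N : ℕ) :
    q • ∑ a ∈ range N, ∑ s ∈ range N,
        (q⁻¹ : F) ^ (a + s) • (compKernel (m + a) (m + 1 + s) * Dq a (Dq s P)) =
      ∑ a ∈ range N, ∑ s ∈ range N,
        (q⁻¹ : F) ^ (a + s) • (compKernel (m + 1 + a) (m + s) * Dq a (Dq s P)) := by
  set g : ℕ → ℕ → SymF := fun a s =>
    (q⁻¹ : F) ^ (a + s) • ((q • (hh (m + a) * hh (m + 1 + s))) * Dq a (Dq s P))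
  have hterm (a s : ℕ) :
      q • ((q⁻¹ : F) ^ (a + s) • (compKernel (m + a) (m + 1 + s) * Dq a (Dq s P))) =
        (q⁻¹ : F) ^ (a + s) • (compKernel (m + 1 + a) (m + s) * Dq a (Dq s P)) +
          (g a s - g s a) := by
    have hshift := q_smul_compKernel (m + a) (m + 1 + s)
    rw [show m + a + 1 = m + 1 + a by ring, show m + 1 + s - 1 = m + s by ring] at hshift
    dsimp only [g]
    rw [smul_comm, ← smul_mul_assoc, hshift, Dq_comm P s a, add_comm s a, ← smul_sub, ← sub_mul,
      ← smul_add, ← add_mul, smul_sub, mul_comm (hh (m + s))]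
  simp only [smul_sum, hterm, sum_add_distrib, sum_sub_distrib]
  rw [sum_comm (f := fun a s => g s a), sub_self, add_zero]

/-- `ℂ_m ℂ_{m+1} = (1/q) ℂ_{m+1} ℂ_m` for every `m ∈ ℤ`. -/
theorem stmt14 (m : ℤ) (P : SymF) :
    Cop m (Cop (m + 1) P) = q⁻¹ • Cop (m + 1) (Cop m P) := by
  obtain ⟨N, hP, hDP⟩ := exists_Dq_Dq_eq_zero P
  rw [Cop_Cop_eq_sum_compKernel m (m + 1) P hP hDP, Cop_Cop_eq_sum_compKernel (m + 1) m P hP hDP,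
    ← q_smul_sum_compKernel, smul_comm q⁻¹, smul_smul q⁻¹ q, inv_mul_cancel₀ q_ne_zero, one_smul, mul_comm]
end
end
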